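/- (Quantitative sensitivity bound) Suppose x ≠ x', and x_i = x'_i for all i ∉ I for a subset I ⊆ Fin n. Then the IDG-Vis score of the full set I satisfies IDGVis(I) ≥ |f(x) − f(x')| / ‖x − x'‖. -/

import Mathlib

/-!
Along the segment `α ↦ x' + α • (x - x')` the fundamental theorem of calculus gives
`f x - f x' = ∫₀¹ ⟪∇f, x - x'⟫`, so `|f x - f x'| ≤ ∫₀¹ |⟪∇f, x - x'⟫|`. When `x` and `x'` agree
outside `I`, the direction `a_I` is `x - x'` itself, so `IDGVis(I)` is that integral divided by
`‖x - x'‖`.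
-/

open scoped RealInnerProductSpace
open MeasureTheory

noncomputable def dirVec {n : ℕ} (x x' : EuclideanSpace ℝ (Fin n)) (T : Finset (Fin n)) :
    EuclideanSpace ℝ (Fin n) :=
  WithLp.toLp 2 (fun i => if i ∈ T then x i - x' i else 0)

noncomputable def unitDir {n : ℕ} (x x' : EuclideanSpace ℝ (Fin n)) (T : Finset (Fin n)) :
    EuclideanSpace ℝ (Fin n) :=
  letI := Classical.dec (dirVec x x' T = 0)
  if dirVec x x' T = 0 then 0 else ‖dirVec x x' T‖⁻¹ • dirVec x x' T

noncomputable def dirGrad {n : ℕ} (f : EuclideanSpace ℝ (Fin n) → ℝ)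
    (x x' : EuclideanSpace ℝ (Fin n)) (T : Finset (Fin n))
    (y : EuclideanSpace ℝ (Fin n)) : ℝ :=
  |⟪gradient f y, unitDir x x' T⟫|

noncomputable def IDGVis {n : ℕ} (f : EuclideanSpace ℝ (Fin n) → ℝ)
    (x x' : EuclideanSpace ℝ (Fin n)) (T : Finset (Fin n)) : ℝ :=
  ∫ α in (0:ℝ)..1, dirGrad f x x' T (x' + α • (x - x'))

noncomputable def setAttr {n : ℕ} (f : EuclideanSpace ℝ (Fin n) → ℝ)
    (x x' : EuclideanSpace ℝ (Fin n)) (I : Finset (Fin n)) : ℝ :=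
  ∑ T ∈ I.powerset, IDGVis f x x' T

theorem ContDiff.abs_sub_le_integral_abs_fderiv_segment {E : Type*} [NormedAddCommGroup E]
    [NormedSpace ℝ E] {f : E → ℝ} (hf : ContDiff ℝ 1 f) (a b : E) :
    |f b - f a| ≤ ∫ t in (0:ℝ)..1, |fderiv ℝ f (a + t • (b - a)) (b - a)| := by
  have hderiv : ∀ t : ℝ, HasDerivAt (fun s : ℝ => f (a + s • (b - a)))
      (fderiv ℝ f (a + t • (b - a)) (b - a)) t := fun t =>
    (hf.differentiable one_ne_zero _).hasFDerivAt.comp_hasDerivAt t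
      (((hasDerivAt_id t).smul_const (b - a)).const_add a |>.congr_deriv (one_smul ℝ _))
  have hcont : Continuous fun t : ℝ => fderiv ℝ f (a + t • (b - a)) (b - a) :=
    ((hf.continuous_fderiv one_ne_zero).comp (by fun_prop)).clm_apply continuous_const
  have hftc : ∫ t in (0:ℝ)..1, fderiv ℝ f (a + t • (b - a)) (b - a) = f b - f a := by
    simpa using intervalIntegral.integral_eq_sub_of_hasDerivAt (fun t _ => hderiv t)
      (hcont.intervalIntegrable 0 1)
  exact hftc ▸ intervalIntegral.abs_integral_le_integral_abs zero_le_one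

section

variable {n : ℕ} {x x' : EuclideanSpace ℝ (Fin n)} {T : Finset (Fin n)}

theorem dirVec_eq_sub (h : ∀ i, i ∉ T → x i = x' i) : dirVec x x' T = x - x' := by
  ext i
  by_cases hi : i ∈ T
  · simp [dirVec, hi]
  · simp [dirVec, hi, h i hi]

-- The `a_T = 0` branch of `unitDir` is subsumed because `0⁻¹ • 0 = 0`.
theorem unitDir_eq_inv_norm_smul : unitDir x x' T = ‖dirVec x x' T‖⁻¹ • dirVec x x' T := by
  by_cases h : dirVec x x' T = 0 <;> simp [unitDir, h]

theorem IDGVis_eq_inv_norm_mul_integral (f : EuclideanSpace ℝ (Fin n) → ℝ) :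
    IDGVis f x x' T = ‖dirVec x x' T‖⁻¹ *
      ∫ α in (0:ℝ)..1, |fderiv ℝ f (x' + α • (x - x')) (dirVec x x' T)| := by
  rw [IDGVis, ← intervalIntegral.integral_const_mul]
  refine intervalIntegral.integral_congr fun α _ => ?_
  rw [dirGrad, unitDir_eq_inv_norm_smul, real_inner_smul_right, inner_gradient_left, abs_mul,
    abs_inv, abs_norm]

end

theorem idgvis_quantitative_sensitivity_general {n : ℕ}
    (f : EuclideanSpace ℝ (Fin n) → ℝ) (hf : ContDiff ℝ 1 f)
    (x x' : EuclideanSpace ℝ (Fin n))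
    (I : Finset (Fin n)) (hagree : ∀ i : Fin n, i ∉ I → x i = x' i) :
    |f x - f x'| / ‖x - x'‖ ≤ IDGVis f x x' I := by
  rw [IDGVis_eq_inv_norm_mul_integral, dirVec_eq_sub hagree, div_eq_inv_mul]
  gcongr
  exact hf.abs_sub_le_integral_abs_fderiv_segment x' x

/-- **Quantitative sensitivity bound.** If `x ≠ x'` and `x` agrees with `x'` outside `I`,
then `IDGVis(I) ≥ |f(x) - f(x')| / ‖x - x'‖`. -/
theorem idgvis_quantitative_sensitivity {n : ℕ} (hn : 1 ≤ n)
    (f : EuclideanSpace ℝ (Fin n) → ℝ) (hf : ContDiff ℝ 1 f)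
    (x x' : EuclideanSpace ℝ (Fin n)) (hxx : x ≠ x')
    (I : Finset (Fin n)) (hagree : ∀ i : Fin n, i ∉ I → x i = x' i) :
    |f x - f x'| / ‖x - x'‖ ≤ IDGVis f x x' I :=
  idgvis_quantitative_sensitivity_general f hf x x' I hagree
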